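/- Let (H,𝓕_A,𝓕_G) be a GR(1) game with 𝓕_A = {F_A¹,…,F_Aᵐ} and 𝓕_G = {F_G¹,…,F_Gⁿ}. Then for every state q ∉ ⟦φ₄ᵛ⟧ and every system strategy f¹ over H, at least one of the following fails: (i) ∅ ≠ L_q(H,f¹) ⊆ L̄_q(H,𝓕_A) ∪ L_q(H,𝓕_G); (ii) Pre(L_q(H,f¹)) = Pre(L_q(H,f¹) ∩ L_q(H,𝓕_A)). -/

import Mathlib

namespace GR1

/-- A two-player game graph `H = ⟨Q⁰, Q¹, δ⁰, δ¹, q₀⟩`.  `env` is the set `Q⁰` of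
environment states, `sys` the set `Q¹` of system states, and `delta` combines the
transition functions `δ⁰` and `δ¹`. -/
structure GameGraph (Q : Type*) where
  env : Set Q
  sys : Set Q
  delta : Q → Set Q
  disjoint_env_sys : Disjoint env sys
  union_env_sys : env ∪ sys = Set.univ
  delta_env : ∀ q ∈ env, delta q ⊆ sys
  delta_sys : ∀ q ∈ sys, delta q ⊆ env
  delta_nonempty : ∀ q, (delta q).Nonempty
  init : Q
  init_env : init ∈ env

namespace GameGraph

/-- The existential predecessor operator `Pre∃`. -/
def PreE {Q : Type*} (G : GameGraph Q) (P : Set Q) : Set Q :=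
  {q | (G.delta q ∩ P).Nonempty}

/-- The universal predecessor operator `Pre∀`. -/
def PreA {Q : Type*} (G : GameGraph Q) (P : Set Q) : Set Q :=
  {q | G.delta q ⊆ P}

/-- The player-0 (environment) controllable predecessor operator `Pre⁰`. -/
def Pre0 {Q : Type*} (G : GameGraph Q) (P : Set Q) : Set Q :=
  {q | q ∈ G.env ∧ (G.delta q ∩ P).Nonempty} ∪ {q | q ∈ G.sys ∧ G.delta q ⊆ P}

/-- The player-1 (system) controllable predecessor operator `Pre¹`. -/
def Pre1 {Q : Type*} (G : GameGraph Q) (P : Set Q) : Set Q :=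
  {q | q ∈ G.env ∧ G.delta q ⊆ P} ∪ {q | q ∈ G.sys ∧ (G.delta q ∩ P).Nonempty}

/-- The conditional predecessor `Precond(P,P') = Pre∃(P) ∩ Pre¹(P ∪ P')`. -/
def Precond {Q : Type*} (G : GameGraph Q) (P P' : Set Q) : Set Q :=
  G.PreE P ∩ G.Pre1 (P ∪ P')

/-- The dual conditional predecessor `Precondᶜ(P,P') = Pre∀(P) ∪ Pre⁰(P ∩ P')`. -/
def PrecondC {Q : Type*} (G : GameGraph Q) (P P' : Set Q) : Set Q :=
  G.PreA P ∪ G.Pre0 (P ∩ P')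

end GameGraph

/-- Knaster–Tarski least fixed point over the powerset lattice. -/
def lfpSet {Q : Type*} (F : Set Q → Set Q) : Set Q := ⋂₀ {S | F S ⊆ S}

/-- Knaster–Tarski greatest fixed point over the powerset lattice. -/
def gfpSet {Q : Type*} (F : Set Q → Set Q) : Set Q := ⋃₀ {S | S ⊆ F S}

/-- Knaster–Tarski least fixed point over the lattice of vectors of sets. -/
def lfpVec {Q : Type*} {n : ℕ} (F : (Fin n → Set Q) → (Fin n → Set Q)) : Fin n → Set Q :=
  fun a => ⋂ V ∈ {V : Fin n → Set Q | ∀ a', F V a' ⊆ V a'}, V a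

/-- Knaster–Tarski greatest fixed point over the lattice of vectors of sets. -/
def gfpVec {Q : Type*} {n : ℕ} (F : (Fin n → Set Q) → (Fin n → Set Q)) : Fin n → Set Q :=
  fun a => ⋃ V ∈ {V : Fin n → Set Q | ∀ a', V a' ⊆ F V a'}, V a

/-- Cyclic successor of a mode: `a⁺ = (a mod n) + 1` in 1-based counting. -/
def modeSucc {n : ℕ} (a : Fin n) : Fin n :=
  ⟨(a.val + 1) % n, Nat.mod_lt _ a.pos⟩

/-- `π` is an (infinite) play over `G` starting in the state `q`. -/
def IsPlayFrom {Q : Type*} (G : GameGraph Q) (q : Q) (π : ℕ → Q) : Prop :=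
  π 0 = q ∧ ∀ k, π (k + 1) ∈ G.delta (π k)

/-- `Inf(π) ∩ F ≠ ∅` : the play `π` visits the set `F` infinitely often. -/
def InfOft {Q : Type*} (π : ℕ → Q) (F : Set Q) : Prop := ∀ n, ∃ k, n ≤ k ∧ π k ∈ F

/-- `L_q(H,F)` : plays from `q` satisfying the Büchi condition `F`. -/
def LBuchi {Q : Type*} (G : GameGraph Q) (q : Q) (F : Set Q) : Set (ℕ → Q) :=
  {π | IsPlayFrom G q π ∧ InfOft π F}

/-- `L_q(H,𝓕)` : plays from `q` satisfying the generalized Büchi condition `𝓕`. -/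
def LGenBuchi {Q ι : Type*} (G : GameGraph Q) (q : Q) (F : ι → Set Q) : Set (ℕ → Q) :=
  {π | IsPlayFrom G q π ∧ ∀ i, InfOft π (F i)}

/-- `Pre(L)` : the set of all finite prefixes of the (infinite) words in `L`. -/
def prefixes {Q : Type*} (L : Set (ℕ → Q)) : Set (List Q) :=
  {w | ∃ π ∈ L, ∃ k, w = (List.range k).map π}

/-- A (history dependent) system strategy: on a history ending in a system state it
produces a `δ¹`-successor of that state. -/
def IsSysStrategy {Q : Type*} (G : GameGraph Q) (f : List Q → Q) : Prop :=
  ∀ (w : List Q) (q : Q), q ∈ G.sys → f (w ++ [q]) ∈ G.delta q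

/-- The finite history `π|_{[0,k]}` of a play. -/
def histUpTo {Q : Type*} (π : ℕ → Q) (k : ℕ) : List Q := (List.range (k + 1)).map π

/-- `L_q(H,f¹)` : plays from `q` compliant with the system strategy `f¹`. -/
def Lstrat {Q : Type*} (G : GameGraph Q) (q : Q) (f : List Q → Q) : Set (ℕ → Q) :=
  {π | IsPlayFrom G q π ∧ ∀ k, π k ∈ G.sys → π (k + 1) = f (histUpTo π k)}

/-- `L_q(H,f¹)` for a memoryless system strategy `f¹ : Q → Q`. -/
def Lmem {Q : Type*} (G : GameGraph Q) (q : Q) (f : Q → Q) : Set (ℕ → Q) :=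
  {π | IsPlayFrom G q π ∧ ∀ k, π k ∈ G.sys → π (k + 1) = f (π k)}

/-- Strict lexicographic order on ranks. -/
def rankLt (p r : ℕ × ℕ) : Prop := p.1 < r.1 ∨ (p.1 = r.1 ∧ p.2 < r.2)

/-- Lexicographic order on ranks. -/
def rankLe (p r : ℕ × ℕ) : Prop := p.1 < r.1 ∨ (p.1 = r.1 ∧ p.2 ≤ r.2)

/-! ### The 4-nested fixed point `φ₄` for singleton winning conditions -/

/-- The body `(F_G ∩ Pre¹(Z)) ∪ Pre¹(Y) ∪ ((Q∖F_A) ∩ Precond(W, X∖F_A))`. -/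
def body {Q : Type*} (G : GameGraph Q) (FA FG Z Y X W : Set Q) : Set Q :=
  (FG ∩ G.Pre1 Z) ∪ G.Pre1 Y ∪ (FAᶜ ∩ G.Precond W (X \ FA))

def innerW {Q : Type*} (G : GameGraph Q) (FA FG Z Y X : Set Q) : Set Q :=
  lfpSet (fun W => body G FA FG Z Y X W)

def innerX {Q : Type*} (G : GameGraph Q) (FA FG Z Y : Set Q) : Set Q :=
  gfpSet (fun X => innerW G FA FG Z Y X)

def innerY {Q : Type*} (G : GameGraph Q) (FA FG Z : Set Q) : Set Q :=
  lfpSet (fun Y => innerX G FA FG Z Y)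

/-- `⟦φ₄⟧ = Z^∞` : the value of `νZ.μY.νX.μW. (F_G ∩ Pre¹(Z)) ∪ Pre¹(Y) ∪
((Q∖F_A) ∩ Precond(W, X∖F_A))`. -/
def phi4 {Q : Type*} (G : GameGraph Q) (FA FG : Set Q) : Set Q :=
  gfpSet (fun Z => innerY G FA FG Z)

/-- The approximants `Yⁱ` of `Y` in the terminal iteration over `Z` (`Y⁰ = ∅`). -/
def Yapprox {Q : Type*} (G : GameGraph Q) (FA FG : Set Q) : ℕ → Set Q
  | 0 => ∅
  | i + 1 => innerX G FA FG (phi4 G FA FG) (Yapprox G FA FG i)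

/-- The approximants `Wⁱ_j` of `W` computed with `X = Xⁱ = Yⁱ` and `Y = Yⁱ⁻¹`. -/
def Wapprox {Q : Type*} (G : GameGraph Q) (FA FG : Set Q) (i : ℕ) : ℕ → Set Q
  | 0 => ∅
  | j + 1 =>
      body G FA FG (phi4 G FA FG) (Yapprox G FA FG (i - 1)) (Yapprox G FA FG i)
        (Wapprox G FA FG i j)

/-- `rank(q) = (i,j)` iff `q ∈ (Yⁱ∖Yⁱ⁻¹) ∩ (Wⁱ_j∖Wⁱ_{j−1})` with `i,j > 0`. -/
def hasRank {Q : Type*} (G : GameGraph Q) (FA FG : Set Q) (q : Q) (i j : ℕ) : Prop :=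
  0 < i ∧ 0 < j ∧
    q ∈ (Yapprox G FA FG i \ Yapprox G FA FG (i - 1)) ∩
        (Wapprox G FA FG i j \ Wapprox G FA FG i (j - 1))

/-- The memoryless system strategy extracted from the ranking: `f¹(q) ∈ δ¹(q)`,
`rank(f¹(q)) < rank(q)` whenever `rank(q) > (1,1)`, and `f¹(q) ∈ Z^∞` otherwise. -/
def GoodStrategy {Q : Type*} (G : GameGraph Q) (FA FG : Set Q) (f : Q → Q) : Prop :=
  ∀ q, q ∈ G.sys → q ∈ phi4 G FA FG →
    f q ∈ G.delta q ∧
      ∀ i j, hasRank G FA FG q i j →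
        (((i, j) = ((1 : ℕ), (1 : ℕ)) → f q ∈ phi4 G FA FG) ∧
          ((i, j) ≠ ((1 : ℕ), (1 : ℕ)) →
            ∃ i' j', hasRank G FA FG (f q) i' j' ∧ rankLt (i', j') (i, j)))

/-! ### The negated fixed point `φ̄₄` (singleton conditions) -/

/-- The simplified negated body
`Pre⁰(Z̄) ∪ ((Q∖F_G) ∩ F_A ∩ Pre⁰(Ȳ)) ∪ ((Q∖F_G) ∩ Precondᶜ(W̄, X̄ ∪ F_A))`. -/
def nbody {Q : Type*} (G : GameGraph Q) (FA FG Z Y X W : Set Q) : Set Q :=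
  G.Pre0 Z ∪ (FGᶜ ∩ FA ∩ G.Pre0 Y) ∪ (FGᶜ ∩ G.PrecondC W (X ∪ FA))

/-- The simplified negated fixed point `φ̄₄ = μZ̄.νȲ.μX̄.νW̄. nbody`. -/
def phi4neg {Q : Type*} (G : GameGraph Q) (FA FG : Set Q) : Set Q :=
  lfpSet (fun Z => gfpSet (fun Y => lfpSet (fun X => gfpSet (fun W =>
    nbody G FA FG Z Y X W))))

/-- The unsimplified negation body
`((Q∖F_G) ∪ Pre⁰(Z̄)) ∩ Pre⁰(Ȳ) ∩ (F_A ∪ Precondᶜ(W̄, X̄ ∪ F_A))`. -/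
def nbodyRaw {Q : Type*} (G : GameGraph Q) (FA FG Z Y X W : Set Q) : Set Q :=
  (FGᶜ ∪ G.Pre0 Z) ∩ G.Pre0 Y ∩ (FA ∪ G.PrecondC W (X ∪ FA))

/-- The unsimplified negated fixed point. -/
def phi4negRaw {Q : Type*} (G : GameGraph Q) (FA FG : Set Q) : Set Q :=
  lfpSet (fun Z => gfpSet (fun Y => lfpSet (fun X => gfpSet (fun W =>
    nbodyRaw G FA FG Z Y X W))))

/-- The approximants `Z̄ⁱ` of the negated fixed point (`Z̄⁰ = ∅`). -/
def Zbar {Q : Type*} (G : GameGraph Q) (FA FG : Set Q) : ℕ → Set Q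
  | 0 => ∅
  | i + 1 =>
      gfpSet (fun Y => lfpSet (fun X => gfpSet (fun W =>
        nbody G FA FG (Zbar G FA FG i) Y X W)))

/-- The approximants `X̄ⁱ_j` of `X̄` computed while computing `Z̄ⁱ` (using `Ȳ = Z̄ⁱ` and
`Z̄ = Z̄ⁱ⁻¹`), with `X̄ⁱ₀ = ∅`. -/
def Xbar {Q : Type*} (G : GameGraph Q) (FA FG : Set Q) (i : ℕ) : ℕ → Set Q
  | 0 => ∅
  | j + 1 =>
      gfpSet (fun W =>
        nbody G FA FG (Zbar G FA FG (i - 1)) (Zbar G FA FG i) (Xbar G FA FG i j) W)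

/-- The negated rank: `rank(q) = (i,j)` iff `q ∈ X̄ⁱ_j ∖ X̄ⁱ_{j−1}` with `i,j > 0`. -/
def nrank {Q : Type*} (G : GameGraph Q) (FA FG : Set Q) (q : Q) (i j : ℕ) : Prop :=
  0 < i ∧ 0 < j ∧ q ∈ Xbar G FA FG i j \ Xbar G FA FG i (j - 1)

/-- Environment moves permitted during the inductive construction of the reachable
region `R_{f¹}` (cases (a'), (b'), (c'2), (c'3) and the remaining case (c'1)). -/
def envStep {Q : Type*} (G : GameGraph Q) (FA FG : Set Q) (q' q'' : Q) : Prop :=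
  q'' ∈ G.delta q' ∧
    ∃ i j, nrank G FA FG q' i j ∧
      ((q'' ∈ (phi4 G FA FG)ᶜ ∧ ∃ i' j', nrank G FA FG q'' i' j' ∧ i' ≤ i - 1) ∨
       (q' ∈ FA \ FG ∧ q'' ∈ (phi4 G FA FG)ᶜ ∧
          ∃ i' j', nrank G FA FG q'' i' j' ∧ i' ≤ i) ∨
       (q'' ∈ (phi4 G FA FG)ᶜ ∧
          ∃ i' j', nrank G FA FG q'' i' j' ∧ rankLe (i', j') (i, j - 1)) ∨
       (q'' ∈ (phi4 G FA FG)ᶜ ∧ q'' ∈ FA ∧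
          ∃ i' j', nrank G FA FG q'' i' j' ∧ rankLe (i', j') (i, j)) ∨
       (∀ p ∈ G.delta q', p ∈ (phi4 G FA FG)ᶜ ∧
          ∃ i' j', nrank G FA FG p i' j' ∧ rankLe (i', j') (i, j)))

/-- `L_q(H,f¹,R_{f¹})` : plays from `q` compliant with `f¹` that remain within the
reachable region `R_{f¹}`, i.e. in which every environment move follows the rules of
the inductive construction of `R_{f¹}`. -/
def Lrestr {Q : Type*} (G : GameGraph Q) (FA FG : Set Q) (q : Q) (f : List Q → Q) :
    Set (ℕ → Q) :=
  {π | π ∈ Lstrat G q f ∧ ∀ k, π k ∈ G.env → envStep G FA FG (π k) (π (k + 1))}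

/-! ### The vectorized fixed point `φ₄ᵛ` for general GR(1) conditions -/

/-- The body `Ω^{ab}` of the vectorized fixed point. -/
def bodyV {Q : Type*} {n m : ℕ} (G : GameGraph Q) (FAv : Fin m → Set Q)
    (FGv : Fin n → Set Q) (Zv : Fin n → Set Q) (a : Fin n) (b : Fin m)
    (Y X W : Set Q) : Set Q :=
  (FGv a ∩ G.Pre1 (Zv (modeSucc a))) ∪ G.Pre1 Y ∪ ((FAv b)ᶜ ∩ G.Precond W (X \ FAv b))

def innerWV {Q : Type*} {n m : ℕ} (G : GameGraph Q) (FAv : Fin m → Set Q)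
    (FGv : Fin n → Set Q) (Zv : Fin n → Set Q) (a : Fin n) (b : Fin m)
    (Y X : Set Q) : Set Q :=
  lfpSet (fun W => bodyV G FAv FGv Zv a b Y X W)

def innerXV {Q : Type*} {n m : ℕ} (G : GameGraph Q) (FAv : Fin m → Set Q)
    (FGv : Fin n → Set Q) (Zv : Fin n → Set Q) (a : Fin n) (b : Fin m)
    (Y : Set Q) : Set Q :=
  gfpSet (fun X => innerWV G FAv FGv Zv a b Y X)

/-- The vector `[Z¹,…,Zⁿ]` of the vectorized fixed point `φ₄ᵛ`. -/
def phi4v {Q : Type*} {n m : ℕ} (G : GameGraph Q) (FAv : Fin m → Set Q)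
    (FGv : Fin n → Set Q) : Fin n → Set Q :=
  gfpVec (fun Zv a => lfpSet (fun Y => ⋃ b, innerXV G FAv FGv Zv a b Y))

/-- `⟦φ₄ᵛ⟧ = Z^∞ = ⋃_a Zᵃ^∞`. -/
def phi4vSem {Q : Type*} {n m : ℕ} (G : GameGraph Q) (FAv : Fin m → Set Q)
    (FGv : Fin n → Set Q) : Set Q :=
  ⋃ a, phi4v G FAv FGv a

/-- The approximants `ᵃYⁱ` (with `ᵃY⁰ = ∅`) of `Yᵃ` in the terminal iteration. -/
def YapproxV {Q : Type*} {n m : ℕ} (G : GameGraph Q) (FAv : Fin m → Set Q)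
    (FGv : Fin n → Set Q) (a : Fin n) : ℕ → Set Q
  | 0 => ∅
  | i + 1 => ⋃ b, innerXV G FAv FGv (phi4v G FAv FGv) a b (YapproxV G FAv FGv a i)

/-- The fixed point `ᵃᵇXⁱ` of `X^{ab}` computed during the `i`-th iteration. -/
def XfixV {Q : Type*} {n m : ℕ} (G : GameGraph Q) (FAv : Fin m → Set Q)
    (FGv : Fin n → Set Q) (a : Fin n) (b : Fin m) (i : ℕ) : Set Q :=
  innerXV G FAv FGv (phi4v G FAv FGv) a b (YapproxV G FAv FGv a (i - 1))

/-- The approximants `ᵃᵇWⁱ_j` of `W^{ab}` computed while computing `ᵃYⁱ`. -/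
def WapproxV {Q : Type*} {n m : ℕ} (G : GameGraph Q) (FAv : Fin m → Set Q)
    (FGv : Fin n → Set Q) (a : Fin n) (b : Fin m) (i : ℕ) : ℕ → Set Q
  | 0 => ∅
  | j + 1 =>
      bodyV G FAv FGv (phi4v G FAv FGv) a b (YapproxV G FAv FGv a (i - 1))
        (XfixV G FAv FGv a b i) (WapproxV G FAv FGv a b i j)

/-- The mode-based rank: `ᵃᵇrank(q) = (i,j)` iff
`q ∈ (ᵃYⁱ∖ᵃYⁱ⁻¹) ∩ (ᵃᵇWⁱ_j∖ᵃᵇWⁱ_{j−1})` with `i,j > 0`. -/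
def hasRankV {Q : Type*} {n m : ℕ} (G : GameGraph Q) (FAv : Fin m → Set Q)
    (FGv : Fin n → Set Q) (a : Fin n) (b : Fin m) (q : Q) (i j : ℕ) : Prop :=
  0 < i ∧ 0 < j ∧
    q ∈ (YapproxV G FAv FGv a i \ YapproxV G FAv FGv a (i - 1)) ∩
        (WapproxV G FAv FGv a b i j \ WapproxV G FAv FGv a b i (j - 1))

/-- The finite-memory system strategy extracted from the mode-based ranking. -/
def GoodStrategyV {Q : Type*} {n m : ℕ} (G : GameGraph Q) (FAv : Fin m → Set Q)
    (FGv : Fin n → Set Q) (f : Q × Fin n × Fin m → Q × Fin n × Fin m) : Prop :=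
  ∀ (q : Q) (a : Fin n) (b : Fin m), q ∈ G.sys → q ∈ phi4v G FAv FGv a →
    (f (q, a, b)).1 ∈ G.delta q ∧
      ∀ i j, hasRankV G FAv FGv a b q i j →
        (((i, j) = ((1 : ℕ), (1 : ℕ)) →
            (f (q, a, b)).1 ∈ phi4v G FAv FGv (modeSucc a) ∧
              (f (q, a, b)).2.1 = modeSucc a) ∧
          (1 < i ∧ j = 1 →
            (f (q, a, b)).2.1 = a ∧
              ∃ i' j',
                hasRankV G FAv FGv a ((f (q, a, b)).2.2) ((f (q, a, b)).1) i' j' ∧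
                  i' ≤ i - 1) ∧
          (1 < j →
            (f (q, a, b)).2.1 = a ∧ (f (q, a, b)).2.2 = b ∧
              ∃ i' j',
                hasRankV G FAv FGv a b ((f (q, a, b)).1) i' j' ∧
                  rankLe (i', j') (i, j - 1)))

/-- Compliance of a play with a finite-memory strategy via mode traces `α`, `β`. -/
def CompliantModeV {Q : Type*} {n m : ℕ} (G : GameGraph Q) (FAv : Fin m → Set Q)
    (FGv : Fin n → Set Q) (f : Q × Fin n × Fin m → Q × Fin n × Fin m)
    (π : ℕ → Q) (α : ℕ → Fin n) (β : ℕ → Fin m) : Prop :=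
  ∀ k,
    (π k ∈ G.sys → (π (k + 1), α (k + 1), β (k + 1)) = f (π k, α k, β k)) ∧
      (π k ∈ G.env →
        (hasRankV G FAv FGv (α k) (β k) (π (k + 1)) 1 1 →
            α (k + 1) = modeSucc (α k)) ∧
          ((∃ i, 1 < i ∧ hasRankV G FAv FGv (α k) (β k) (π (k + 1)) i 1) →
            α (k + 1) = α k) ∧
          ((∃ i j, 1 < j ∧ hasRankV G FAv FGv (α k) (β k) (π (k + 1)) i j) →
            α (k + 1) = α k ∧ β (k + 1) = β k))

/-- `L_q(H,f¹)` for a finite-memory strategy: plays from `q` compliant with `f¹`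
for some mode traces. -/
def LmodeV {Q : Type*} {n m : ℕ} (G : GameGraph Q) (FAv : Fin m → Set Q)
    (FGv : Fin n → Set Q) (q : Q) (f : Q × Fin n × Fin m → Q × Fin n × Fin m) :
    Set (ℕ → Q) :=
  {π | IsPlayFrom G q π ∧ ∃ α β, CompliantModeV G FAv FGv f π α β}

/-- `ᵃD = F_Gᵃ ∩ Pre¹(Z^{a⁺,∞})`. -/
def DsetV {Q : Type*} {n m : ℕ} (G : GameGraph Q) (FAv : Fin m → Set Q)
    (FGv : Fin n → Set Q) (a : Fin n) : Set Q :=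
  FGv a ∩ G.Pre1 (phi4v G FAv FGv (modeSucc a))

/-- `ᵃEⁱ = Pre¹(ᵃYⁱ⁻¹) ∖ ᵃYⁱ⁻¹`. -/
def EsetV {Q : Type*} {n m : ℕ} (G : GameGraph Q) (FAv : Fin m → Set Q)
    (FGv : Fin n → Set Q) (a : Fin n) (i : ℕ) : Set Q :=
  G.Pre1 (YapproxV G FAv FGv a (i - 1)) \ YapproxV G FAv FGv a (i - 1)

/-- `ᵃᵇΘⁱ_j = (Q∖F_Aᵇ) ∩ Precond(ᵃᵇWⁱ_{j−1}, ᵃᵇXⁱ∖F_Aᵇ)`. -/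
def ThetaV {Q : Type*} {n m : ℕ} (G : GameGraph Q) (FAv : Fin m → Set Q)
    (FGv : Fin n → Set Q) (a : Fin n) (b : Fin m) (i j : ℕ) : Set Q :=
  (FAv b)ᶜ ∩ G.Precond (WapproxV G FAv FGv a b i (j - 1)) (XfixV G FAv FGv a b i \ FAv b)

/-- `ᵃᵇRⁱ_j = ᵃᵇΘⁱ_j ∖ (ᵃᵇWⁱ_{j−1} ∪ ᵃYⁱ⁻¹ ∪ ᵃEⁱ ∪ ᵃD)`. -/
def RsetV {Q : Type*} {n m : ℕ} (G : GameGraph Q) (FAv : Fin m → Set Q)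
    (FGv : Fin n → Set Q) (a : Fin n) (b : Fin m) (i j : ℕ) : Set Q :=
  ThetaV G FAv FGv a b i j \
    (WapproxV G FAv FGv a b i (j - 1) ∪ YapproxV G FAv FGv a (i - 1) ∪
      EsetV G FAv FGv a i ∪ DsetV G FAv FGv a)

/-! ### The negated vectorized fixed point -/

/-- The body of the negated vectorized fixed point. -/
def nbodyV {Q : Type*} {n m : ℕ} (G : GameGraph Q) (FAv : Fin m → Set Q)
    (FGv : Fin n → Set Q) (Zv : Fin n → Set Q) (a : Fin n) (b : Fin m)
    (Y X W : Set Q) : Set Q :=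
  G.Pre0 (Zv (modeSucc a)) ∪ ((FGv a)ᶜ ∩ FAv b ∩ G.Pre0 Y) ∪
    ((FGv a)ᶜ ∩ G.PrecondC W (X ∪ FAv b))

/-- The coordinated approximants `Z̄ᵃⁱ` of the negated vectorized fixed point. -/
def ZbarV {Q : Type*} {n m : ℕ} (G : GameGraph Q) (FAv : Fin m → Set Q)
    (FGv : Fin n → Set Q) : ℕ → Fin n → Set Q
  | 0 => fun _ => ∅
  | i + 1 => fun a =>
      gfpSet (fun Y => ⋂ b, lfpSet (fun X => gfpSet (fun W =>
        nbodyV G FAv FGv (ZbarV G FAv FGv i) a b Y X W)))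

/-- The approximants `X̄^{ab,i}_j` of `X̄^{ab}` computed during the `i`-th iteration. -/
def XbarV {Q : Type*} {n m : ℕ} (G : GameGraph Q) (FAv : Fin m → Set Q)
    (FGv : Fin n → Set Q) (a : Fin n) (b : Fin m) (i : ℕ) : ℕ → Set Q
  | 0 => ∅
  | j + 1 =>
      gfpSet (fun W =>
        nbodyV G FAv FGv (ZbarV G FAv FGv (i - 1)) a b (ZbarV G FAv FGv i a)
          (XbarV G FAv FGv a b i j) W)

/-- The negated mode-based rank: `ᵃᵇrank(q) = (i,j)` iff `q ∈ X̄^{ab,i}_j∖X̄^{ab,i}_{j−1}`. -/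
def nrankV {Q : Type*} {n m : ℕ} (G : GameGraph Q) (FAv : Fin m → Set Q)
    (FGv : Fin n → Set Q) (a : Fin n) (b : Fin m) (q : Q) (i j : ℕ) : Prop :=
  0 < i ∧ 0 < j ∧ q ∈ XbarV G FAv FGv a b i j \ XbarV G FAv FGv a b i (j - 1)

/-- Environment moves permitted during the inductive construction of `R_{f¹}`
in the vectorized setting. -/
def envStepV {Q : Type*} {n m : ℕ} (G : GameGraph Q) (FAv : Fin m → Set Q)
    (FGv : Fin n → Set Q) (q' q'' : Q) : Prop :=
  q'' ∈ G.delta q' ∧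
    ∃ (a : Fin n) (b : Fin m) (i j : ℕ), nrankV G FAv FGv a b q' i j ∧
      ((q'' ∈ (phi4vSem G FAv FGv)ᶜ ∧
          ∃ b' i' j', nrankV G FAv FGv (modeSucc a) b' q'' i' j' ∧ i' ≤ i - 1) ∨
       (q' ∈ FAv b \ FGv a ∧ q'' ∈ (phi4vSem G FAv FGv)ᶜ ∧
          ∃ b' i' j', nrankV G FAv FGv a b' q'' i' j' ∧ i' ≤ i) ∨
       (q'' ∈ (phi4vSem G FAv FGv)ᶜ ∧
          ∃ i' j', nrankV G FAv FGv a b q'' i' j' ∧ rankLe (i', j') (i, j - 1)) ∨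
       (q'' ∈ (phi4vSem G FAv FGv)ᶜ ∧ q'' ∈ FAv b ∧
          ∃ i' j', nrankV G FAv FGv a b q'' i' j' ∧ rankLe (i', j') (i, j)) ∨
       (∀ p ∈ G.delta q', p ∈ (phi4vSem G FAv FGv)ᶜ ∧
          ∃ i' j', nrankV G FAv FGv a b p i' j' ∧ rankLe (i', j') (i, j)))

/-- `L_q(H,f¹,R_{f¹})` in the vectorized setting. -/
def LrestrV {Q : Type*} {n m : ℕ} (G : GameGraph Q) (FAv : Fin m → Set Q)
    (FGv : Fin n → Set Q) (q : Q) (f : List Q → Q) : Set (ℕ → Q) :=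
  {π | π ∈ Lstrat G q f ∧ ∀ k, π k ∈ G.env → envStepV G FAv FGv (π k) (π (k + 1))}

/-! If a strategy `f¹` from `q` satisfied (i) and (ii), let `S` be the set of states visited by
its plays; the constant vector `[S,…,S]` is then a post-fixed point of the outer `ν`, so that
`q ∈ S ⊆ ⟦φ₄ᵛ⟧`. Fix `a`, let `Yᵃ = μY.⋁_b νX.μW.Ω^{ab}` at `Z = S` and
`E = (F_Gᵃ ∩ Pre¹(S)) ∪ Pre¹(Yᵃ)`. By (ii) every compliant history extends to a compliant play
satisfying `𝓕_A`, which by (i) visits `F_Gᵃ`, hence `E`. So a history ending outside `Yᵃ` can,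
for each `b`, be continued into `F_Aᵇ` while avoiding `E`: otherwise the states reachable while
avoiding `E` form a set `X` with `X ⊆ μW.Ω^{ab}`, by induction on the distance to `E`, whence
`X ⊆ νX.μW.Ω^{ab} ⊆ Yᵃ`. Stepping once more outside `Yᵃ` and cycling through `b`, the limit is a
compliant play satisfying `𝓕_A` that never visits `E` again, contradicting (i). -/

section FixedPoints

variable {Q : Type*} {F F' : Set Q → Set Q} {S : Set Q}

theorem lfpSet_subset (h : F S ⊆ S) : lfpSet F ⊆ S :=
  Set.sInter_subset_of_mem h

theorem subset_gfpSet (h : S ⊆ F S) : S ⊆ gfpSet F :=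
  Set.subset_sUnion_of_mem h

theorem map_lfpSet_subset (hF : Monotone F) : F (lfpSet F) ⊆ lfpSet F :=
  Set.subset_sInter fun _ hT => (hF (lfpSet_subset hT)).trans hT

theorem lfpSet_mono (h : ∀ S, F S ⊆ F' S) : lfpSet F ⊆ lfpSet F' :=
  Set.subset_sInter fun T hT => lfpSet_subset ((h T).trans hT)

theorem gfpSet_mono (h : ∀ S, F S ⊆ F' S) : gfpSet F ⊆ gfpSet F' :=
  Set.sUnion_subset fun T hT => subset_gfpSet (hT.trans (h T))

theorem subset_gfpVec {n : ℕ} {Φ : (Fin n → Set Q) → Fin n → Set Q} {V : Fin n → Set Q}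
    (h : ∀ a, V a ⊆ Φ V a) (a : Fin n) : V a ⊆ gfpVec Φ a :=
  fun _ hx => Set.mem_iUnion₂.2 ⟨V, h, hx⟩

end FixedPoints

namespace GameGraph

variable {Q : Type*} (G : GameGraph Q) {P P' : Set Q} {x : Q}

@[gcongr]
theorem Pre1_mono (h : P ⊆ P') : G.Pre1 P ⊆ G.Pre1 P' := by
  rintro x (⟨hx, hP⟩ | ⟨hx, hP⟩)
  · exact Or.inl ⟨hx, hP.trans h⟩
  · exact Or.inr ⟨hx, hP.mono (Set.inter_subset_inter_right _ h)⟩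

@[gcongr]
theorem PreE_mono (h : P ⊆ P') : G.PreE P ⊆ G.PreE P' :=
  fun _ hx => hx.mono (Set.inter_subset_inter_right _ h)

@[gcongr]
theorem Precond_mono {R R' : Set Q} (h : P ⊆ P') (h' : R ⊆ R') :
    G.Precond P R ⊆ G.Precond P' R' := by
  unfold Precond
  gcongr

theorem env_or_sys (x : Q) : x ∈ G.env ∨ x ∈ G.sys :=
  (Set.ext_iff.1 G.union_env_sys x).2 trivial

theorem not_mem_sys_of_mem_env (hx : x ∈ G.env) : x ∉ G.sys :=
  Set.disjoint_left.1 G.disjoint_env_sys hx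

theorem mem_Pre1_of_env (hx : x ∈ G.env) : x ∈ G.Pre1 P ↔ G.delta x ⊆ P :=
  ⟨fun h => h.elim And.right fun h' => absurd h'.1 (G.not_mem_sys_of_mem_env hx),
    fun h => Or.inl ⟨hx, h⟩⟩

theorem mem_Pre1_of_sys (hx : x ∈ G.sys) : x ∈ G.Pre1 P ↔ (G.delta x ∩ P).Nonempty :=
  ⟨fun h => h.elim (fun h' => absurd hx (G.not_mem_sys_of_mem_env h'.1)) And.right,
    fun h => Or.inr ⟨hx, h⟩⟩

end GameGraph

section VectorizedBody

variable {Q : Type*} {n m : ℕ} {G : GameGraph Q} {FAv : Fin m → Set Q} {FGv : Fin n → Set Q}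
  {Zv : Fin n → Set Q} {a : Fin n} {b : Fin m}

theorem bodyV_mono {Y Y' X X' W W' : Set Q} (hY : Y ⊆ Y') (hX : X ⊆ X') (hW : W ⊆ W') :
    bodyV G FAv FGv Zv a b Y X W ⊆ bodyV G FAv FGv Zv a b Y' X' W' := by
  unfold bodyV
  gcongr

theorem innerXV_mono {Y Y' : Set Q} (hY : Y ⊆ Y') :
    innerXV G FAv FGv Zv a b Y ⊆ innerXV G FAv FGv Zv a b Y' :=
  gfpSet_mono fun _ => lfpSet_mono fun _ => bodyV_mono hY subset_rfl subset_rfl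

theorem bodyV_innerWV_subset {Y X : Set Q} :
    bodyV G FAv FGv Zv a b Y X (innerWV G FAv FGv Zv a b Y X) ⊆ innerWV G FAv FGv Zv a b Y X :=
  map_lfpSet_subset fun _ _ hW => bodyV_mono subset_rfl subset_rfl hW

/-- The `a`-th component `μYᵃ.⋁_b νX^{ab}.μW^{ab}.Ω^{ab}` of the body of `φ₄ᵛ`, so that
`phi4v G FAv FGv = gfpVec (innerYV G FAv FGv)`. -/
def innerYV (G : GameGraph Q) (FAv : Fin m → Set Q) (FGv : Fin n → Set Q)
    (Zv : Fin n → Set Q) (a : Fin n) : Set Q :=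
  lfpSet fun Y => ⋃ b, innerXV G FAv FGv Zv a b Y

theorem innerXV_innerYV_subset :
    innerXV G FAv FGv Zv a b (innerYV G FAv FGv Zv a) ⊆ innerYV G FAv FGv Zv a :=
  (Set.subset_iUnion (fun b => innerXV G FAv FGv Zv a b (innerYV G FAv FGv Zv a)) b).trans <|
    map_lfpSet_subset (F := fun Y => ⋃ b, innerXV G FAv FGv Zv a b Y) fun _ _ hY =>
      Set.iUnion_mono fun _ => innerXV_mono hY

/-- The part of `Ω^{ab}` that depends neither on `b` nor on `X`, `W` once `Y = Yᵃ`. -/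
def exitV (G : GameGraph Q) (FAv : Fin m → Set Q) (FGv : Fin n → Set Q)
    (Zv : Fin n → Set Q) (a : Fin n) : Set Q :=
  (FGv a ∩ G.Pre1 (Zv (modeSucc a))) ∪ G.Pre1 (innerYV G FAv FGv Zv a)

theorem exitV_subset_innerWV {X : Set Q} :
    exitV G FAv FGv Zv a ⊆ innerWV G FAv FGv Zv a b (innerYV G FAv FGv Zv a) X :=
  fun _ hr => bodyV_innerWV_subset (Or.inl hr)

theorem exitV_subset_innerYV [NeZero m] : exitV G FAv FGv Zv a ⊆ innerYV G FAv FGv Zv a :=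
  (subset_gfpSet (exitV_subset_innerWV (b := 0))).trans innerXV_innerYV_subset

end VectorizedBody

section Plays

variable {Q : Type*}

theorem histUpTo_congr {π σ : ℕ → Q} {k : ℕ} (h : ∀ i ≤ k, π i = σ i) :
    histUpTo π k = histUpTo σ k :=
  List.map_congr_left fun i hi => h i (Nat.lt_succ_iff.1 (List.mem_range.1 hi))

theorem histUpTo_eq_append (π : ℕ → Q) (k : ℕ) :
    histUpTo π k = (List.range k).map π ++ [π k] := by
  simp [histUpTo, List.range_succ]

theorem IsSysStrategy.mem_delta {G : GameGraph Q} {f : List Q → Q} (hf : IsSysStrategy G f)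
    {π : ℕ → Q} {k : ℕ} (hk : π k ∈ G.sys) : f (histUpTo π k) ∈ G.delta (π k) := by
  rw [histUpTo_eq_append]
  exact hf _ _ hk

def extendPlay (g : List Q → Q) (σ : ℕ → Q) (k : ℕ) : ℕ → Q
  | i => if i ≤ k then σ i else
      g ((List.range i).attach.map fun j => extendPlay g σ k j.1)
decreasing_by exact List.mem_range.1 j.2

theorem extendPlay_of_le (g : List Q → Q) (σ : ℕ → Q) {k i : ℕ} (hi : i ≤ k) :
    extendPlay g σ k i = σ i := by
  rw [extendPlay, if_pos hi]

theorem extendPlay_succ (g : List Q → Q) (σ : ℕ → Q) {k i : ℕ} (hi : k ≤ i) :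
    extendPlay g σ k (i + 1) = g (histUpTo (extendPlay g σ k) i) := by
  rw [extendPlay, if_neg (by omega), histUpTo]
  simp

variable {G : GameGraph Q} {q : Q} {f : List Q → Q}

theorem exists_extension_of_env (hf : IsSysStrategy G f) {π : ℕ → Q} (hπ : π ∈ Lstrat G q f)
    {k : ℕ} (hk : π k ∈ G.env) {c : Q} (hc : c ∈ G.delta (π k)) :
    ∃ π' ∈ Lstrat G q f, (∀ i ≤ k, π' i = π i) ∧ π' (k + 1) = c := by
  classical
  let g : List Q → Q := fun u =>
    if u.getLastD q ∈ G.sys then f u else (G.delta_nonempty (u.getLastD q)).choose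
  let π' := extendPlay g (Function.update π (k + 1) c) (k + 1)
  have hlow : ∀ i ≤ k, π' i = π i := fun i hi =>
    (extendPlay_of_le _ _ (by omega)).trans (Function.update_of_ne (by omega) _ _)
  have hc' : π' (k + 1) = c :=
    (extendPlay_of_le _ _ le_rfl).trans (Function.update_self _ _ _)
  have hstep : ∀ j, π' (j + 1) ∈ G.delta (π' j) ∧
      (π' j ∈ G.sys → π' (j + 1) = f (histUpTo π' j)) := by
    intro j
    rcases lt_trichotomy j k with hj | rfl | hj
    · rw [hlow j hj.le, hlow (j + 1) hj, histUpTo_congr fun i hi => hlow i (by omega)]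
      exact ⟨hπ.1.2 j, hπ.2 j⟩
    · rw [hc', hlow j le_rfl]
      exact ⟨hc, fun hs => absurd hs (G.not_mem_sys_of_mem_env hk)⟩
    · have hlast : (histUpTo π' j).getLastD q = π' j := by simp [histUpTo_eq_append]
      rw [show π' (j + 1) = g (histUpTo π' j) from extendPlay_succ _ _ (by omega)]
      simp only [g, hlast]
      split_ifs with hs
      · exact ⟨hf.mem_delta hs, fun _ => rfl⟩
      · exact ⟨(G.delta_nonempty _).choose_spec, fun h => absurd h hs⟩
  exact ⟨π', ⟨⟨(hlow 0 k.zero_le).trans hπ.1.1, fun j => (hstep j).1⟩, fun j => (hstep j).2⟩,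
    hlow, hc'⟩

theorem exists_extension_not_mem (hf : IsSysStrategy G f) {π : ℕ → Q} (hπ : π ∈ Lstrat G q f)
    {k : ℕ} {P : Set Q} (hk : π k ∉ G.Pre1 P) :
    ∃ π' ∈ Lstrat G q f, (∀ i ≤ k, π' i = π i) ∧ π' (k + 1) ∉ P := by
  rcases G.env_or_sys (π k) with henv | hsys
  · obtain ⟨c, hc, hcP⟩ := Set.not_subset.1 ((G.mem_Pre1_of_env henv).not.1 hk)
    obtain ⟨π', hπ', hag, rfl⟩ := exists_extension_of_env hf hπ henv hc
    exact ⟨π', hπ', hag, hcP⟩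
  · exact ⟨π, hπ, fun _ _ => rfl, fun hP => hk ((G.mem_Pre1_of_sys hsys).2 ⟨_, hπ.1.2 k, hP⟩)⟩

theorem mem_Lstrat_of_forall_prefix {π : ℕ → Q}
    (h : ∀ k, ∃ σ ∈ Lstrat G q f, ∀ i ≤ k + 1, π i = σ i) : π ∈ Lstrat G q f := by
  refine ⟨⟨?_, fun k => ?_⟩, fun k hk => ?_⟩
  · obtain ⟨σ, hσ, hag⟩ := h 0
    exact (hag 0 (Nat.zero_le _)).trans hσ.1.1
  · obtain ⟨σ, hσ, hag⟩ := h k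
    rw [hag k (by omega), hag (k + 1) le_rfl]
    exact hσ.1.2 k
  · obtain ⟨σ, hσ, hag⟩ := h k
    rw [hag k (by omega)] at hk
    rw [hag (k + 1) le_rfl, hσ.2 k hk, histUpTo_congr fun i hi => hag i (by omega)]

theorem exists_limit_mem_Lstrat {πs : ℕ → ℕ → Q} {ks : ℕ → ℕ}
    (hmem : ∀ t, πs t ∈ Lstrat G q f) (hks : StrictMono ks)
    (hagree : ∀ t, ∀ i ≤ ks t, πs (t + 1) i = πs t i) :
    ∃ π ∈ Lstrat G q f, ∀ t, ∀ i ≤ ks t, π i = πs t i := by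
  have hchain : ∀ t t', t ≤ t' → ∀ i ≤ ks t, πs t' i = πs t i := by
    intro t t' h
    induction h with
    | refl => exact fun _ _ => rfl
    | step h ih => exact fun i hi => (hagree _ i (hi.trans (hks.monotone h))).trans (ih i hi)
  have hlim : ∀ t, ∀ i ≤ ks t, πs i i = πs t i := fun t i hi =>
    (le_total i t).elim (fun h => (hchain i t h i (hks.id_le i)).symm) fun h => hchain t i h i hi
  exact ⟨fun i => πs i i,
    mem_Lstrat_of_forall_prefix fun k => ⟨πs (k + 1), hmem _, fun i hi =>
      hlim (k + 1) i (hi.trans (hks.id_le _))⟩, hlim⟩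

def reachableStates (G : GameGraph Q) (q : Q) (f : List Q → Q) : Set Q :=
  {r | ∃ π ∈ Lstrat G q f, ∃ k, π k = r}

theorem reachableStates_subset_Pre1 (hf : IsSysStrategy G f) :
    reachableStates G q f ⊆ G.Pre1 (reachableStates G q f) := by
  rintro _ ⟨π, hπ, k, rfl⟩
  by_contra hk
  obtain ⟨π', hπ', -, hout⟩ := exists_extension_not_mem hf hπ hk
  exact hout ⟨π', hπ', k + 1, rfl⟩

end Plays

section Continuations

variable {Q : Type*} {G : GameGraph Q} {q : Q} {f : List Q → Q}

def AlwaysReachable (G : GameGraph Q) (q : Q) (f : List Q → Q) (E : Set Q) : Prop :=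
  ∀ π ∈ Lstrat G q f, ∀ k, ∃ σ ∈ Lstrat G q f, (∀ i ≤ k, σ i = π i) ∧ ∃ l, k < l ∧ σ l ∈ E

def AvoidingContinuation (G : GameGraph Q) (q : Q) (f : List Q → Q) (π₀ : ℕ → Q) (k₀ : ℕ)
    (E : Set Q) (σ : ℕ → Q) (k : ℕ) : Prop :=
  σ ∈ Lstrat G q f ∧ k₀ ≤ k ∧ (∀ i ≤ k₀, σ i = π₀ i) ∧ ∀ j ∈ Set.Ioc k₀ k, σ j ∉ E

def avoidingStates (G : GameGraph Q) (q : Q) (f : List Q → Q) (π₀ : ℕ → Q) (k₀ : ℕ)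
    (E : Set Q) : Set Q :=
  {r | ∃ σ k, AvoidingContinuation G q f π₀ k₀ E σ k ∧ σ k = r}

variable {π₀ σ : ℕ → Q} {k₀ k : ℕ} {E L : Set Q}

theorem AvoidingContinuation.refl (hπ₀ : π₀ ∈ Lstrat G q f) :
    AvoidingContinuation G q f π₀ k₀ E π₀ k₀ :=
  ⟨hπ₀, le_rfl, fun _ _ => rfl, fun _ hj => absurd hj.2 (not_le.2 hj.1)⟩

theorem AvoidingContinuation.succ (h : AvoidingContinuation G q f π₀ k₀ E σ k)
    (hE : σ (k + 1) ∉ E) : AvoidingContinuation G q f π₀ k₀ E σ (k + 1) := by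
  refine ⟨h.1, h.2.1.trans k.le_succ, h.2.2.1, fun j hj => ?_⟩
  rcases Nat.lt_or_ge j (k + 1) with hjk | hjk
  · exact h.2.2.2 j ⟨hj.1, Nat.lt_succ_iff.1 hjk⟩
  · rwa [le_antisymm hj.2 hjk]

theorem AvoidingContinuation.of_agree (h : AvoidingContinuation G q f π₀ k₀ E σ k)
    {σ' : ℕ → Q} (hσ' : σ' ∈ Lstrat G q f) (hag : ∀ i ≤ k, σ' i = σ i) :
    AvoidingContinuation G q f π₀ k₀ E σ' k :=
  ⟨hσ', h.2.1, fun i hi => (hag i (hi.trans h.2.1)).trans (h.2.2.1 i hi),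
    fun j hj => hag j hj.2 ▸ h.2.2.2 j hj⟩

theorem AvoidingContinuation.mem_Precond (hf : IsSysStrategy G f)
    (h : AvoidingContinuation G q f π₀ k₀ E σ k) (hEL : E ⊆ L) (hL : σ (k + 1) ∈ L) :
    σ k ∈ G.Precond L (avoidingStates G q f π₀ k₀ E) := by
  refine ⟨⟨_, h.1.1.2 k, hL⟩, ?_⟩
  rcases G.env_or_sys (σ k) with henv | hsys
  · refine (G.mem_Pre1_of_env henv).2 fun c hc => ?_
    by_cases hcE : c ∈ E
    · exact Or.inl (hEL hcE)
    · obtain ⟨σ', hσ', hag, rfl⟩ := exists_extension_of_env hf h.1 henv hc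
      exact Or.inr ⟨σ', k + 1, (h.of_agree hσ' hag).succ hcE, rfl⟩
  · exact (G.mem_Pre1_of_sys hsys).2 ⟨_, h.1.1.2 k, Or.inl hL⟩

theorem AvoidingContinuation.mem_of_mem_add (hf : IsSysStrategy G f)
    (hEL : E ⊆ L) (hL : avoidingStates G q f π₀ k₀ E ∩
      G.Precond L (avoidingStates G q f π₀ k₀ E) ⊆ L) (p : ℕ) :
    ∀ k, AvoidingContinuation G q f π₀ k₀ E σ k → σ (k + p + 1) ∈ E → σ k ∈ L := by
  induction p with
  | zero => exact fun k h hE => hL ⟨⟨σ, k, h, rfl⟩, h.mem_Precond hf hEL (hEL hE)⟩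
  | succ p ih =>
    intro k h hE
    have hnext : σ (k + 1) ∈ L := by
      by_cases hE₁ : σ (k + 1) ∈ E
      · exact hEL hE₁
      · exact ih (k + 1) (h.succ hE₁) (by rwa [show k + 1 + p + 1 = k + (p + 1) + 1 by omega])
    exact hL ⟨⟨σ, k, h, rfl⟩, h.mem_Precond hf hEL hnext⟩

theorem avoidingStates_subset (hf : IsSysStrategy G f) (hE : AlwaysReachable G q f E)
    (hEL : E ⊆ L)
    (hL : avoidingStates G q f π₀ k₀ E ∩ G.Precond L (avoidingStates G q f π₀ k₀ E) ⊆ L) :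
    avoidingStates G q f π₀ k₀ E ⊆ L := by
  rintro _ ⟨σ, k, h, rfl⟩
  obtain ⟨σ', hσ', hag, l, hkl, hl⟩ := hE σ h.1 k
  rw [← hag k le_rfl]
  exact (h.of_agree hσ' hag).mem_of_mem_add hf hEL hL (l - k - 1) k
    (by rwa [show k + (l - k - 1) + 1 = l by omega])

end Continuations

section Completeness

variable {Q : Type*} {n m : ℕ} {G : GameGraph Q} {q : Q} {f : List Q → Q}

theorem exists_fair_extension {ι : Type*} {F : ι → Set Q}
    (h3 : prefixes (Lstrat G q f) = prefixes (Lstrat G q f ∩ LGenBuchi G q F))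
    {π : ℕ → Q} (hπ : π ∈ Lstrat G q f) (k : ℕ) :
    ∃ σ ∈ Lstrat G q f, (∀ i ≤ k, σ i = π i) ∧ ∀ i, InfOft σ (F i) := by
  obtain ⟨σ, ⟨hσ, -, hfair⟩, k', hk'⟩ : (List.range (k + 1)).map π ∈
      prefixes (Lstrat G q f ∩ LGenBuchi G q F) := h3 ▸ ⟨π, hπ, k + 1, rfl⟩
  obtain rfl : k' = k + 1 := by simpa using (congrArg List.length hk').symm
  refine ⟨σ, hσ, fun i hi => ?_, hfair⟩
  simpa [List.getElem?_range, Nat.lt_succ_iff.2 hi] using (congrArg (·[i]?) hk').symm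

theorem exists_fair_play_of_progress [NeZero m] {A : Fin m → Set Q} {E : Set Q}
    {P : (ℕ → Q) → ℕ → Prop} (hP : ∀ π k, P π k → π ∈ Lstrat G q f)
    (hstep : ∀ π k, P π k → ∀ b, ∃ π' k', P π' k' ∧ k < k' ∧ (∀ i ≤ k, π' i = π i) ∧
      (∀ j ∈ Set.Ioc k k', π' j ∉ E) ∧ ∃ p ∈ Set.Icc k k', π' p ∈ A b)
    {π₀ : ℕ → Q} {k₀ : ℕ} (h₀ : P π₀ k₀) :
    ∃ π ∈ Lstrat G q f, (∀ b, InfOft π (A b)) ∧ ∀ j, k₀ < j → π j ∉ E := by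
  choose! next nextTime hnext using hstep
  let seq : ℕ → (ℕ → Q) × ℕ := fun t => Nat.rec (π₀, k₀)
    (fun t s => (next s.1 s.2 (Fin.ofNat m t), nextTime s.1 s.2 (Fin.ofNat m t))) t
  have hseq : ∀ t, P (seq t).1 (seq t).2 := fun t => by
    induction t with
    | zero => exact h₀
    | succ t ih => exact (hnext _ _ ih (Fin.ofNat m t)).1
  have hs : ∀ t, (seq t).2 < (seq (t + 1)).2 ∧ (∀ i ≤ (seq t).2, (seq (t + 1)).1 i = (seq t).1 i) ∧
      (∀ j ∈ Set.Ioc (seq t).2 (seq (t + 1)).2, (seq (t + 1)).1 j ∉ E) ∧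
      ∃ p ∈ Set.Icc (seq t).2 (seq (t + 1)).2, (seq (t + 1)).1 p ∈ A (Fin.ofNat m t) :=
    fun t => (hnext _ _ (hseq t) _).2
  obtain ⟨π, hπ, hlim⟩ := exists_limit_mem_Lstrat (fun t => hP _ _ (hseq t))
    (strictMono_nat_of_lt_succ fun t => (hs t).1) fun t => (hs t).2.1
  have hks : StrictMono fun t => (seq t).2 := strictMono_nat_of_lt_succ fun t => (hs t).1
  have havoid : ∀ t, ∀ j ∈ Set.Ioc k₀ (seq t).2, (seq t).1 j ∉ E := by
    intro t
    induction t with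
    | zero => exact fun j hj => absurd hj.2 (not_le.2 hj.1)
    | succ t ih =>
      intro j hj
      rcases le_or_gt j (seq t).2 with hjt | hjt
      · exact (hs t).2.1 j hjt ▸ ih j ⟨hj.1, hjt⟩
      · exact (hs t).2.2.1 j ⟨hjt, hj.2⟩
  refine ⟨π, hπ, fun b N => ?_, fun j hj => ?_⟩
  · obtain ⟨p, hp, hpA⟩ := (hs (b + N * m)).2.2.2
    have hb : Fin.ofNat m (b + N * m) = b := by
      ext
      simp [Fin.ofNat, Nat.mod_eq_of_lt b.2]
    refine ⟨p, ?_, ?_⟩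
    · have h₁ : b + N * m ≤ (seq (b + N * m)).2 := hks.id_le _
      have h₂ : N ≤ N * m := Nat.le_mul_of_pos_right N (Nat.pos_of_ne_zero (NeZero.ne m))
      have h₃ := hp.1
      omega
    · rw [hlim (b + N * m + 1) p hp.2]
      rwa [hb] at hpA
  · rw [hlim j j (hks.id_le j)]
    exact havoid j j ⟨hj, hks.id_le j⟩

end Completeness

section Core

variable {Q : Type*} {n m : ℕ} {G : GameGraph Q} {FAv : Fin m → Set Q} {FGv : Fin n → Set Q}
  {q : Q} {f : List Q → Q}

local notation "𝒴" => innerYV G FAv FGv (fun _ => reachableStates G q f)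
local notation "ℰ" => exitV G FAv FGv (fun _ => reachableStates G q f)

theorem infOft_exitV (hf : IsSysStrategy G f)
    (h2 : Lstrat G q f ⊆ (LGenBuchi G q FAv)ᶜ ∪ LGenBuchi G q FGv) {σ : ℕ → Q}
    (hσ : σ ∈ Lstrat G q f) (hfair : ∀ b, InfOft σ (FAv b)) (a : Fin n) :
    InfOft σ (ℰ a) := by
  rcases h2 hσ with h | h
  · exact absurd ⟨hσ.1, hfair⟩ h
  · intro N
    obtain ⟨l, hl, hFG⟩ := h.2 a N
    exact ⟨l, hl, Or.inl ⟨hFG, reachableStates_subset_Pre1 hf ⟨σ, hσ, l, rfl⟩⟩⟩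

theorem alwaysReachable_exitV (hf : IsSysStrategy G f)
    (h2 : Lstrat G q f ⊆ (LGenBuchi G q FAv)ᶜ ∪ LGenBuchi G q FGv)
    (h3 : prefixes (Lstrat G q f) = prefixes (Lstrat G q f ∩ LGenBuchi G q FAv)) (a : Fin n) :
    AlwaysReachable G q f (ℰ a) := by
  intro π hπ k
  obtain ⟨σ, hσ, hag, hfair⟩ := exists_fair_extension h3 hπ k
  obtain ⟨l, hl, hlE⟩ := infOft_exitV hf h2 hσ hfair a (k + 1)
  exact ⟨σ, hσ, hag, l, hl, hlE⟩

theorem exists_avoidingContinuation_mem (hf : IsSysStrategy G f)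
    (h2 : Lstrat G q f ⊆ (LGenBuchi G q FAv)ᶜ ∪ LGenBuchi G q FGv)
    (h3 : prefixes (Lstrat G q f) = prefixes (Lstrat G q f ∩ LGenBuchi G q FAv))
    {a : Fin n} {π₀ : ℕ → Q} {k₀ : ℕ} (hπ₀ : π₀ ∈ Lstrat G q f) (hY : π₀ k₀ ∉ 𝒴 a)
    (b : Fin m) : ∃ σ k, AvoidingContinuation G q f π₀ k₀ (ℰ a) σ k ∧ σ k ∈ FAv b := by
  by_contra hno
  simp only [not_exists, not_and] at hno
  set X := avoidingStates G q f π₀ k₀ (ℰ a)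
  have hXA : X ⊆ X \ FAv b := by
    rintro _ ⟨σ, k, h, rfl⟩
    exact ⟨⟨σ, k, h, rfl⟩, hno σ k h⟩
  have hXL : X ⊆ innerWV G FAv FGv (fun _ => reachableStates G q f) a b (𝒴 a) X :=
    avoidingStates_subset hf (alwaysReachable_exitV hf h2 h3 a) exitV_subset_innerWV
      fun r ⟨hr, hpre⟩ => bodyV_innerWV_subset <|
        Or.inr ⟨(hXA hr).2, G.Precond_mono subset_rfl hXA hpre⟩
  exact hY (innerXV_innerYV_subset (subset_gfpSet hXL ⟨π₀, k₀, .refl hπ₀, rfl⟩))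

theorem exists_progress [NeZero m] (hf : IsSysStrategy G f)
    (h2 : Lstrat G q f ⊆ (LGenBuchi G q FAv)ᶜ ∪ LGenBuchi G q FGv)
    (h3 : prefixes (Lstrat G q f) = prefixes (Lstrat G q f ∩ LGenBuchi G q FAv))
    {a : Fin n} {π : ℕ → Q} {k : ℕ} (hπ : π ∈ Lstrat G q f) (hY : π k ∉ 𝒴 a) (b : Fin m) :
    ∃ π' k', (π' ∈ Lstrat G q f ∧ π' k' ∉ 𝒴 a) ∧ k < k' ∧ (∀ i ≤ k, π' i = π i) ∧
      (∀ j ∈ Set.Ioc k k', π' j ∉ ℰ a) ∧ ∃ p ∈ Set.Icc k k', π' p ∈ FAv b := by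
  have hEY : ℰ a ⊆ 𝒴 a := exitV_subset_innerYV
  obtain ⟨σ, k₁, ⟨hσ, hk₁, hag, hav⟩, hA⟩ := exists_avoidingContinuation_mem hf h2 h3 hπ hY b
  have hE : σ k₁ ∉ ℰ a := by
    rcases hk₁.eq_or_lt with rfl | hlt
    · exact hag k le_rfl ▸ fun h => hY (hEY h)
    · exact hav k₁ ⟨hlt, le_rfl⟩
  obtain ⟨σ', hσ', hag', hY'⟩ := exists_extension_not_mem hf hσ fun h => hE (Or.inr h)
  refine ⟨σ', k₁ + 1, ⟨hσ', hY'⟩, by omega, fun i hi => (hag' i (by omega)).trans (hag i hi),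
    fun j hj => ?_, k₁, ⟨hk₁, by omega⟩, (hag' k₁ le_rfl).symm ▸ hA⟩
  rcases le_or_gt j k₁ with hjk | hjk
  · exact (hag' j hjk).symm ▸ hav j ⟨hj.1, hjk⟩
  · exact le_antisymm hj.2 hjk ▸ fun h => hY' (hEY h)

theorem reachableStates_subset_innerYV [NeZero m] (hf : IsSysStrategy G f)
    (h2 : Lstrat G q f ⊆ (LGenBuchi G q FAv)ᶜ ∪ LGenBuchi G q FGv)
    (h3 : prefixes (Lstrat G q f) = prefixes (Lstrat G q f ∩ LGenBuchi G q FAv)) (a : Fin n) :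
    reachableStates G q f ⊆ 𝒴 a := by
  rintro _ ⟨π₀, hπ₀, k₀, rfl⟩
  by_contra hY
  obtain ⟨π, hπ, hfair, havoid⟩ := exists_fair_play_of_progress
    (P := fun π k => π ∈ Lstrat G q f ∧ π k ∉ 𝒴 a) (fun _ _ h => h.1)
    (fun _ _ h b => exists_progress hf h2 h3 h.1 h.2 b) ⟨hπ₀, hY⟩
  obtain ⟨l, hl, hlE⟩ := infOft_exitV hf h2 hπ hfair a (k₀ + 1)
  exact havoid l hl hlE

end Core

theorem completeness_vectorized_general {Q : Type*} {n m : ℕ} [NeZero n] [NeZero m]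
    (G : GameGraph Q) (FAv : Fin m → Set Q) (FGv : Fin n → Set Q)
    (q : Q) (hq : q ∉ phi4vSem G FAv FGv)
    (f : List Q → Q) (hf : IsSysStrategy G f) :
    ¬(((Lstrat G q f).Nonempty ∧
          Lstrat G q f ⊆ (LGenBuchi G q FAv)ᶜ ∪ LGenBuchi G q FGv) ∧
        prefixes (Lstrat G q f) = prefixes (Lstrat G q f ∩ LGenBuchi G q FAv)) := by
  rintro ⟨⟨⟨π, hπ⟩, h2⟩, h3⟩
  exact hq <| Set.mem_iUnion.2 ⟨0, subset_gfpVec (V := fun _ => reachableStates G q f)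
    (reachableStates_subset_innerYV hf h2 h3) 0 ⟨π, hπ, 0, hπ.1.1⟩⟩

/-- Theorem 3, completeness part: for every state `q ∉ ⟦φ₄ᵛ⟧` and
every system strategy `f¹`, either (i) `∅ ≠ L_q(H,f¹) ⊆ L̄_q(H,𝓕_A) ∪ L_q(H,𝓕_G)`
fails, or (ii) `Pre(L_q(H,f¹)) = Pre(L_q(H,f¹) ∩ L_q(H,𝓕_A))` fails. -/
theorem completeness_vectorized {Q : Type*} [Fintype Q] {n m : ℕ} [NeZero n] [NeZero m]
    (G : GameGraph Q) (FAv : Fin m → Set Q) (FGv : Fin n → Set Q)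
    (q : Q) (hq : q ∉ phi4vSem G FAv FGv)
    (f : List Q → Q) (hf : IsSysStrategy G f) :
    ¬(((Lstrat G q f).Nonempty ∧
          Lstrat G q f ⊆ (LGenBuchi G q FAv)ᶜ ∪ LGenBuchi G q FGv) ∧
        prefixes (Lstrat G q f) = prefixes (Lstrat G q f ∩ LGenBuchi G q FAv)) :=
  completeness_vectorized_general G FAv FGv q hq f hf

end GR1
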